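/- arXiv:2402.08574 — 2 statements merged into one kernel-verified Lean document; each statement's English description precedes it below -/
import Mathlib

section
/- Let θ₀ > 0 and β₀ ∈ (0, π/4). Then there exist η > 0, ε > 0 and c > 0 such that: for every δ > 0, every admissible cutoff χ on [0,δ] with sup_{u ∈ [0,δ]} |χ'(u)| ≤ (1+ε)/δ, every θ = θ₁ + iθ₂ ∈ ℂ with θ₁ ∈ (−θ₀, η) and θ₂ ∈ (−β₀, η), and every u ∈ (0,δ), one has Re( J'_θ(u)^{−2} ) ≥ c. -/
open Real Set Complex

/-- An admissible cutoff on `[0, δ]`. -/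
def IsAdmissibleCutoff (δ : ℝ) (χ : ℝ → ℝ) : Prop :=
  ContDiff ℝ (⊤ : ℕ∞) χ ∧ Antitone χ ∧ (∀ u, χ u ∈ Set.Icc (0:ℝ) 1) ∧
    (∀ᶠ u in nhds (0:ℝ), χ u = 1) ∧ (∃ a < δ, ∀ u > a, χ u = 0)

/-- `J'_θ(u) = (1 + θ u χ'(u)) e^{θ χ(u)}`. -/
noncomputable def Jder (χ : ℝ → ℝ) (θ : ℂ) (u : ℝ) : ℂ :=
  (1 + θ * (u : ℂ) * ((deriv χ u : ℝ) : ℂ)) * Complex.exp (θ * ((χ u : ℝ) : ℂ))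

/-- The derivative of an antitone differentiable function is nonpositive. -/
lemma antitone_deriv_nonpos {χ : ℝ → ℝ} (hχ : Antitone χ) {u : ℝ}
    (hd : DifferentiableAt ℝ χ u) : deriv χ u ≤ 0 := by
  have h := hd.hasDerivAt
  rw [hasDerivAt_iff_tendsto_slope] at h
  refine le_of_tendsto h ?_
  filter_upwards [self_mem_nhdsWithin] with x hx
  rcases lt_or_gt_of_ne (hx : x ≠ u) with h1 | h1
  · rw [slope_def_field]
    apply div_nonpos_of_nonneg_of_nonpos
    · have := hχ h1.le; linarith
    · linarith
  · rw [slope_def_field]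
    apply div_nonpos_of_nonpos_of_nonneg
    · have := hχ h1.le; linarith
    · linarith

/-- Real part of the inverse square of `(a + bi) e^{p + qi}`. -/
lemma re_inv_sq (a b p q : ℝ) (h : a^2+b^2 ≠ 0) :
  (((((a:ℂ) + b*Complex.I) * Complex.exp ((p:ℂ) + q*Complex.I))^2)⁻¹).re
    = ((a^2-b^2)*Real.cos (2*q) - 2*a*b*Real.sin (2*q)) / (Real.exp (2*p) * (a^2+b^2)^2) := by
  set z : ℂ := ((a:ℂ) + b*Complex.I) * Complex.exp ((p:ℂ) + q*Complex.I) with hz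
  have h1 : (z^2).re = Real.exp (2*p) * ((a^2-b^2)*Real.cos (2*q) - 2*a*b*Real.sin (2*q)) := by
    have : z^2 = (((a:ℂ) + b*Complex.I))^2 * Complex.exp ((2*p:ℝ) + (2*q:ℝ)*Complex.I) := by
      rw [hz, mul_pow, sq (Complex.exp _), ← Complex.exp_add]
      push_cast; ring_nf
    rw [this]
    simp [Complex.mul_re, Complex.mul_im, Complex.exp_re, Complex.exp_im, pow_two]
    ring
  have h2 : Complex.normSq (z^2) = (Real.exp (2*p))^2 * (a^2+b^2)^2 := by
    rw [map_pow, hz, map_mul, Complex.normSq_eq_norm_sq (Complex.exp _), Complex.norm_exp]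
    simp [Complex.normSq_apply]
    rw [show (2:ℝ)*p = p + p from two_mul p, Real.exp_add]
    ring
  rw [Complex.inv_re, h1, h2]
  have hE : Real.exp (2*p) ≠ 0 := (Real.exp_pos _).ne'
  field_simp

lemma exp_two_lt_nine : Real.exp 2 < 9 := by
  have h2 : Real.exp 2 = Real.exp 1 * Real.exp 1 := by rw [← Real.exp_add]; norm_num
  nlinarith [Real.exp_one_lt_d9, Real.exp_pos 1]

set_option maxHeartbeats 4000000 in
/-- The core numeric estimate. -/
lemma key_bound (θ₀ β₀ g η ε θ₁ θ₂ t s : ℝ) (hθ₀ : 0 < θ₀) (hβpos : 0 < β₀)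
    (hβ4 : β₀ < π / 4)
    (hg : g = (1 - β₀)/4) (hη1 : 0 < η) (hη2 : η ≤ g/2) (hη3 : η ≤ β₀)
    (hε1 : 0 < ε) (hε2 : ε ≤ g) (hε3 : ε ≤ 1)
    (ht0 : t ≤ 0) (ht1 : -(1+ε) ≤ t) (hs0 : 0 ≤ s) (hs1 : s ≤ 1)
    (hθ1l : -θ₀ < θ₁) (hθ1u : θ₁ < η) (hθ2l : -β₀ < θ₂) (hθ2u : θ₂ < η) :
    Real.cos (2*β₀) * ((1-β₀)/2) * (3/4) / (9 * ((1+2*θ₀)^2+1)^2)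
      ≤ (((1+θ₁*t)^2-(θ₂*t)^2) * Real.cos (2*(θ₂*s)) -
          2*(1+θ₁*t)*(θ₂*t) * Real.sin (2*(θ₂*s)))
        / (Real.exp (2*(θ₁*s)) * ((1+θ₁*t)^2+(θ₂*t)^2)^2) := by
  subst hg
  have hπ4 : π < 4 := Real.pi_lt_four
  have hπ3 : 3 < π := Real.pi_gt_three
  have hβ1 : β₀ < 1 := by nlinarith
  have hθ2β : |θ₂| ≤ β₀ := abs_le.mpr ⟨hθ2l.le, le_trans hθ2u.le hη3⟩
  have hcos_pos : 0 < Real.cos (2*β₀) := by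
    refine Real.cos_pos_of_mem_Ioo ⟨?_, ?_⟩ <;> nlinarith
  set g : ℝ := (1 - β₀)/4 with hgdef
  have hgpos : 0 < g := by rw [hgdef]; linarith
  have hg4 : g ≤ 1/4 := by rw [hgdef]; linarith
  set a : ℝ := 1 + θ₁ * t with hadef
  set b : ℝ := θ₂ * t with hbdef
  clear_value g a b
  have ha_lb : 1 - g ≤ a := by
    have h1 : 0 ≤ (η - θ₁) * (-t) := mul_nonneg (by linarith) (by linarith)
    nlinarith [mul_nonneg hgpos.le (sub_nonneg.mpr hε3)]
  have ha_ub : a ≤ 1 + 2*θ₀ := by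
    have h1 : 0 ≤ (θ₁ + θ₀) * (-t) := mul_nonneg (by linarith) (by linarith)
    nlinarith [mul_nonneg hθ₀.le (sub_nonneg.mpr hε3)]
  have ha_pos : 0 < a := by nlinarith
  have hb2 : b^2 ≤ (β₀ + g)^2 := by
    have h1 : θ₂^2 ≤ β₀^2 := sq_le_sq' (by linarith) (le_trans hθ2u.le hη3)
    have h2 : t^2 ≤ (1+ε)^2 := sq_le_sq' ht1 (by linarith)
    have hbe : β₀*(1+ε) ≤ β₀ + g := by
      nlinarith [mul_nonneg hε1.le (by linarith : (0:ℝ) ≤ 1 - β₀)]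
    have h5 : (β₀*(1+ε))^2 ≤ (β₀+g)^2 := pow_le_pow_left₀ (by positivity) hbe 2
    calc b^2 = θ₂^2 * t^2 := by rw [hbdef]; ring
    _ ≤ β₀^2 * (1+ε)^2 := mul_le_mul h1 h2 (sq_nonneg t) (sq_nonneg β₀)
    _ = (β₀*(1+ε))^2 := by ring
    _ ≤ (β₀+g)^2 := h5
  have hbg1 : β₀ + g ≤ 1 := by rw [hgdef]; linarith
  -- cos bound
  have hq_abs : |2*(θ₂*s)| ≤ 2*β₀ := by
    rw [abs_mul, _root_.abs_two, abs_mul, _root_.abs_of_nonneg hs0]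
    nlinarith [abs_le.mp hθ2β, abs_nonneg θ₂,
      mul_nonneg (abs_nonneg θ₂) (sub_nonneg.mpr hs1)]
  have hcosq : Real.cos (2*β₀) ≤ Real.cos (2*(θ₂*s)) := by
    rw [← Real.cos_abs (2*(θ₂*s))]
    exact Real.cos_le_cos_of_nonneg_of_le_pi (abs_nonneg _) (by linarith) hq_abs
  -- sin sign
  have hsgn : 0 ≤ θ₂ * Real.sin (2*(θ₂*s)) := by
    rcases le_or_gt 0 θ₂ with h | h
    · apply mul_nonneg h
      apply Real.sin_nonneg_of_nonneg_of_le_pi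
      · positivity
      · nlinarith [mul_nonneg h (sub_nonneg.mpr hs1)]
    · have hsq : Real.sin (2*(θ₂*s)) ≤ 0 := by
        apply Real.sin_nonpos_of_nonpos_of_neg_pi_le
        · nlinarith [mul_nonneg (neg_nonneg.2 h.le) hs0]
        · nlinarith [mul_nonneg (neg_nonneg.2 h.le) (sub_nonneg.2 hs1)]
      nlinarith [mul_nonneg (neg_nonneg.2 h.le) (neg_nonneg.2 hsq)]
  have hsin : 0 ≤ -(2*a*b*Real.sin (2*(θ₂*s))) := by
    have hbs : -(2*a*b*Real.sin (2*(θ₂*s)))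
        = 2*a*((-t)*(θ₂*Real.sin (2*(θ₂*s)))) := by rw [hbdef]; ring
    rw [hbs]
    exact mul_nonneg (by linarith) (mul_nonneg (by linarith) hsgn)
  have hA : (1-g)^2 ≤ a^2 := pow_le_pow_left₀ (by linarith) ha_lb 2
  have hsq_diff : ((1-β₀)/2) * (3/4) ≤ a^2 - b^2 := by
    rw [hgdef] at hA hb2
    nlinarith [hA, hb2, hβpos.le, mul_nonneg hβpos.le hβpos.le]
  have hN : Real.cos (2*β₀) * ((1-β₀)/2) * (3/4)
      ≤ (a^2-b^2) * Real.cos (2*(θ₂*s)) - 2*a*b*Real.sin (2*(θ₂*s)) := by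
    have h1 : ((1-β₀)/2) * (3/4) * Real.cos (2*β₀)
        ≤ (a^2-b^2) * Real.cos (2*(θ₂*s)) :=
      mul_le_mul hsq_diff hcosq hcos_pos.le (by nlinarith)
    have h2 : Real.cos (2*β₀) * ((1-β₀)/2) * (3/4)
        = ((1-β₀)/2) * (3/4) * Real.cos (2*β₀) := by ring
    linarith
  have hp1 : θ₁ * s ≤ 1 := by
    have e1 : θ₁ * s ≤ η * s := mul_le_mul_of_nonneg_right hθ1u.le hs0
    have e2 : η * s ≤ η * 1 := mul_le_mul_of_nonneg_left hs1 hη1.le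
    have e3 : η * 1 = η := mul_one η
    linarith
  have hexp : Real.exp (2*(θ₁*s)) ≤ 9 := by
    have h1 : Real.exp (2*(θ₁*s)) ≤ Real.exp 2 := Real.exp_le_exp.mpr (by linarith)
    linarith [exp_two_lt_nine]
  have hD : Real.exp (2*(θ₁*s)) * (a^2+b^2)^2 ≤ 9 * ((1+2*θ₀)^2+1)^2 := by
    have hb1 : b^2 ≤ 1 := by
      nlinarith [hb2, mul_nonneg (sub_nonneg.2 hbg1)
        (by positivity : (0:ℝ) ≤ 1 + (β₀+g))]
    have ha2 : a^2 ≤ (1+2*θ₀)^2 := by nlinarith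
    have hab : a^2 + b^2 ≤ (1+2*θ₀)^2 + 1 := by linarith
    have hsq : (a^2+b^2)^2 ≤ ((1+2*θ₀)^2+1)^2 :=
      pow_le_pow_left₀ (by positivity) hab 2
    exact mul_le_mul hexp hsq (sq_nonneg _) (by norm_num)
  have hNpos : 0 < Real.cos (2*β₀) * ((1-β₀)/2) * (3/4) := by
    apply mul_pos (mul_pos hcos_pos (by linarith)); norm_num
  have hDpos : 0 < Real.exp (2*(θ₁*s)) * (a^2+b^2)^2 := by positivity
  exact div_le_div₀ (le_trans hNpos.le hN) hN hDpos hD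

/-- For `θ₀ > 0` and `β₀ ∈ (0, π/4)`, there exist `η, ε, c > 0` such that for every
`δ > 0`, every admissible cutoff `χ` on `[0,δ]` with `|χ'| ≤ (1+ε)/δ`, every
`θ = θ₁ + iθ₂` with `θ₁ ∈ (−θ₀, η)`, `θ₂ ∈ (−β₀, η)`, and every `u ∈ (0,δ)`, one has
`Re(J'_θ(u)⁻²) ≥ c`. -/
theorem re_jder_inv_sq_lower_bound (θ₀ β₀ : ℝ) (hθ₀ : 0 < θ₀)
    (hβ₀ : β₀ ∈ Set.Ioo 0 (π / 4)) :
    ∃ η > (0:ℝ), ∃ ε > (0:ℝ), ∃ c > (0:ℝ), ∀ δ > (0:ℝ), ∀ χ : ℝ → ℝ,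
      IsAdmissibleCutoff δ χ →
      (∀ u ∈ Set.Icc (0:ℝ) δ, |deriv χ u| ≤ (1 + ε) / δ) →
      ∀ θ : ℂ, θ.re ∈ Set.Ioo (-θ₀) η → θ.im ∈ Set.Ioo (-β₀) η →
      ∀ u ∈ Set.Ioo (0:ℝ) δ, c ≤ (((Jder χ θ u) ^ 2)⁻¹).re := by
  obtain ⟨hβpos, hβlt⟩ := hβ₀
  have hπ4 : π < 4 := Real.pi_lt_four
  have hβ1 : β₀ < 1 := by nlinarith
  have hgpos : (0:ℝ) < (1 - β₀)/4 := by linarith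
  have hcos_pos : 0 < Real.cos (2*β₀) := by
    have hπ3 : 3 < π := Real.pi_gt_three
    refine Real.cos_pos_of_mem_Ioo ⟨?_, ?_⟩ <;> nlinarith
  refine ⟨min ((1-β₀)/4/2) β₀, lt_min (by linarith) hβpos,
    min ((1-β₀)/4) 1, lt_min hgpos one_pos,
    Real.cos (2*β₀) * ((1-β₀)/2) * (3/4) / (9 * ((1+2*θ₀)^2+1)^2), ?_, ?_⟩
  · apply div_pos
    · apply mul_pos (mul_pos hcos_pos (by linarith)); norm_num
    · positivity
  intro δ hδ χ hχ hχ' θ hθ1 hθ2 u hu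
  obtain ⟨hsmooth, hanti, hrange, -, -⟩ := hχ
  have hd_nonpos : deriv χ u ≤ 0 :=
    antitone_deriv_nonpos hanti ((hsmooth.differentiable (by simp)).differentiableAt)
  have ht0 : u * deriv χ u ≤ 0 := mul_nonpos_of_nonneg_of_nonpos hu.1.le hd_nonpos
  have habs : |deriv χ u| ≤ (1 + min ((1-β₀)/4) 1)/δ := hχ' u ⟨hu.1.le, hu.2.le⟩
  have ht1 : -(1 + min ((1-β₀)/4) 1) ≤ u * deriv χ u := by
    have h3 : -(deriv χ u) ≤ (1 + min ((1-β₀)/4) 1)/δ := by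
      have := (abs_le.mp habs).1; linarith
    have h4 : u * (-(deriv χ u)) ≤ u * ((1 + min ((1-β₀)/4) 1)/δ) :=
      mul_le_mul_of_nonneg_left h3 hu.1.le
    have h5 : u * ((1 + min ((1-β₀)/4) 1)/δ) ≤ δ * ((1 + min ((1-β₀)/4) 1)/δ) := by
      apply mul_le_mul_of_nonneg_right hu.2.le
      have : (0:ℝ) < 1 + min ((1-β₀)/4) 1 := by positivity
      positivity
    have h6 : δ * ((1 + min ((1-β₀)/4) 1)/δ) = 1 + min ((1-β₀)/4) 1 := by
      field_simp
    nlinarith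
  have hs0 : 0 ≤ χ u := (hrange u).1
  have hs1 : χ u ≤ 1 := (hrange u).2
  -- rewrite Jder in the canonical form
  have hw : Jder χ θ u = (((1 + θ.re * (u * deriv χ u) : ℝ):ℂ)
        + ((θ.im * (u * deriv χ u) : ℝ):ℂ)*Complex.I)
      * Complex.exp (((θ.re * χ u : ℝ):ℂ) + ((θ.im * χ u : ℝ):ℂ)*Complex.I) := by
    rw [Jder]
    congr 1
    · apply Complex.ext <;>
        simp [Complex.mul_re, Complex.mul_im] <;> ring
    · congr 1
      apply Complex.ext <;>
        simp [Complex.mul_re, Complex.mul_im]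
  have ha_pos : 0 < 1 + θ.re * (u * deriv χ u) := by
    have h1 : 0 ≤ (min ((1-β₀)/4/2) β₀ - θ.re) * (-(u * deriv χ u)) :=
      mul_nonneg (by linarith [hθ1.2]) (by linarith)
    have h2 : min ((1-β₀)/4/2) β₀ ≤ (1-β₀)/4/2 := min_le_left _ _
    have h3 : min ((1-β₀)/4) 1 ≤ 1 := min_le_right _ _
    have h4 : 0 < min ((1-β₀)/4/2) β₀ := lt_min (by linarith) hβpos
    nlinarith
  have hab_ne : (1 + θ.re * (u * deriv χ u))^2 + (θ.im * (u * deriv χ u))^2 ≠ 0 := by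
    positivity
  rw [hw, re_inv_sq _ _ _ _ hab_ne]
  have := key_bound θ₀ β₀ ((1-β₀)/4) (min ((1-β₀)/4/2) β₀) (min ((1-β₀)/4) 1)
    θ.re θ.im (u * deriv χ u) (χ u) hθ₀ hβpos hβlt rfl
    (lt_min (by linarith) hβpos) (min_le_left _ _)
    (min_le_right _ _) (lt_min hgpos one_pos)
    (min_le_left _ _) (min_le_right _ _) ht0 ht1 hs0 hs1
    hθ1.1 hθ1.2 hθ2.1 hθ2.2
  exact this
end

section
/- Let L > 0 and let γ₁, n₁ : ℝ → ℝ be 2L-periodic, three times continuously differentiable functions such that: γ₁(0) = 0; γ₁(s) > 0 for every s ∈ [−L, L] with s ≠ 0; γ₁'(0) = 0; γ₁''(0) = κ₀ > 0; n₁(0) = −1; n₁'(0) = 0; and |n₁(s)| ≤ 1 for all s. Let α ∈ [0, 3π/5) and β ∈ ℝ with (α, β) ∈ 𝒯. Then there exist s₀ > 0, δ₀ > 0 and c > 0 such that for every δ ∈ (0, δ₀), every admissible cutoff χ on [0,δ], and every (s,u) ∈ [−L, L] × (0, δ): if |s| ≥ s₀ then Re( e^{i(α−β)} ( γ₁(s)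 − u e^{−i(α/3)χ(u)} n₁(s) ) ) ≥ c, and if |s| ≤ s₀ then Re( e^{i(α−β)} ( γ₁(s) − u e^{−i(α/3)χ(u)} n₁(s) ) ) ≥ c (u + s²). -/
open Real Set Complex

/-- Membership in the set `𝒯 = {(α,β) ∈ [0,∞) × ℝ : β − 2α/3 > −π/2,
β + 2α/3 < π/2, −π/2 < α − β < π/2}`. -/
def memT (α β : ℝ) : Prop :=
  0 ≤ α ∧ -(π / 2) < β - 2 * α / 3 ∧ β + 2 * α / 3 < π / 2 ∧
    -(π / 2) < α - β ∧ α - β < π / 2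

lemma re_formula (φ θ x y u : ℝ) :
    (Complex.exp (Complex.I * (φ:ℂ)) * ((x:ℂ) - (u:ℂ) * Complex.exp (-Complex.I * (θ:ℂ)) * (y:ℂ))).re
      = x * Real.cos φ - u * y * Real.cos (φ - θ) := by
  rw [show Complex.I * (φ:ℂ) = (φ:ℂ) * Complex.I by ring,
    show -Complex.I * (θ:ℂ) = ((-θ:ℝ):ℂ) * Complex.I by push_cast; ring,
    Complex.exp_mul_I, Complex.exp_mul_I, Real.cos_sub]
  simp [Complex.ext_iff, Complex.cos_ofReal_re, Complex.sin_ofReal_re, Real.cos_neg, Real.sin_neg]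
  ring

lemma quad_lower (γ₁ : ℝ → ℝ) (κ₀ s₀ : ℝ) (hs₀ : 0 < s₀)
    (hd1 : Differentiable ℝ γ₁) (hd2 : Differentiable ℝ (deriv γ₁))
    (hγ0 : γ₁ 0 = 0) (hγ'0 : deriv γ₁ 0 = 0)
    (h2 : ∀ t ∈ Set.Icc (-s₀) s₀, κ₀ / 2 < deriv (deriv γ₁) t) :
    ∀ s, |s| ≤ s₀ → κ₀ / 4 * s ^ 2 ≤ γ₁ s := by
  set p : ℝ → ℝ := fun t => deriv γ₁ t - κ₀ / 2 * t with hp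
  have hpd : ∀ x, deriv p x = deriv (deriv γ₁) x - κ₀ / 2 := by
    intro x
    have := ((hd2 x).hasDerivAt.sub (((hasDerivAt_id x).const_mul (κ₀ / 2)))).deriv
    show deriv (deriv γ₁ - fun y => κ₀ / 2 * y) x = _
    simpa using this
  have hpmono : StrictMonoOn p (Set.Icc (-s₀) s₀) := by
    apply strictMonoOn_of_deriv_pos (convex_Icc _ _)
    · exact (hd2.continuous.sub (continuous_const.mul continuous_id)).continuousOn
    · intro x hx
      rw [interior_Icc] at hx
      rw [hpd]
      have := h2 x ⟨hx.1.le, hx.2.le⟩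
      linarith
  have hp0 : p 0 = 0 := by simp [hp, hγ'0]
  set h : ℝ → ℝ := fun t => γ₁ t - κ₀ / 4 * t ^ 2 with hh
  have hhd : ∀ x, deriv h x = p x := by
    intro x
    have := ((hd1 x).hasDerivAt.sub ((hasDerivAt_pow 2 x).const_mul (κ₀ / 4))).deriv
    show deriv (γ₁ - fun y => κ₀ / 4 * y ^ 2) x = deriv γ₁ x - κ₀ / 2 * x
    rw [this]
    norm_num <;> ring
  have hcont : ContinuousOn h (Set.Icc (-s₀) s₀) :=
    (hd1.continuous.sub (continuous_const.mul (continuous_pow 2))).continuousOn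
  have hmono : StrictMonoOn h (Set.Icc 0 s₀) := by
    apply strictMonoOn_of_deriv_pos (convex_Icc _ _)
      (hcont.mono (Set.Icc_subset_Icc (by linarith) le_rfl))
    intro x hx
    rw [interior_Icc] at hx
    rw [hhd, ← hp0]
    exact hpmono ⟨by linarith, by linarith⟩ ⟨by linarith [hx.1], hx.2.le⟩ hx.1
  have hanti : StrictAntiOn h (Set.Icc (-s₀) 0) := by
    apply strictAntiOn_of_deriv_neg (convex_Icc _ _)
      (hcont.mono (Set.Icc_subset_Icc le_rfl (by linarith)))
    intro x hx
    rw [interior_Icc] at hx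
    rw [hhd, ← hp0]
    exact hpmono ⟨hx.1.le, by linarith [hx.2]⟩ ⟨by linarith, by linarith⟩ hx.2
  intro s hs
  rw [abs_le] at hs
  have h0 : h 0 = 0 := by simp [hh, hγ0]
  rcases lt_trichotomy s 0 with hlt | heq | hgt
  · have := hanti ⟨hs.1, hlt.le⟩ ⟨by linarith, le_rfl⟩ hlt
    rw [h0] at this
    simp only [hh] at this; linarith
  · simp [heq, hγ0]
  · have := hmono ⟨le_rfl, by linarith⟩ ⟨hgt.le, hs.2⟩ hgt
    rw [h0] at this
    simp only [hh] at this; linarith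

/-- Coercivity of the (complex-dilated) electric potential
`Γ₁(s, J_θ(u)) = γ₁(s) − u e^{−i(α/3)χ(u)} n₁(s)` near the left-most boundary point:
`Re(e^{i(α−β)} Γ₁) ≥ c` for `|s| ≥ s₀` and `Re(e^{i(α−β)} Γ₁) ≥ c (u + s²)` for
`|s| ≤ s₀`. -/
theorem re_potential_lower_bound (L κ₀ : ℝ) (hL : 0 < L) (γ₁ n₁ : ℝ → ℝ)
    (hγper : Function.Periodic γ₁ (2 * L)) (hnper : Function.Periodic n₁ (2 * L))
    (hγ : ContDiff ℝ 3 γ₁) (hn : ContDiff ℝ 3 n₁)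
    (hγ0 : γ₁ 0 = 0) (hγpos : ∀ s ∈ Set.Icc (-L) L, s ≠ 0 → 0 < γ₁ s)
    (hγ'0 : deriv γ₁ 0 = 0) (hγ''0 : iteratedDeriv 2 γ₁ 0 = κ₀) (hκ : 0 < κ₀)
    (hn0 : n₁ 0 = -1) (hn'0 : deriv n₁ 0 = 0) (hn1 : ∀ s, |n₁ s| ≤ 1)
    (α β : ℝ) (hα : α ∈ Set.Ico (0:ℝ) (3 * π / 5)) (hT : memT α β) :
    ∃ s₀ > (0:ℝ), ∃ δ₀ > (0:ℝ), ∃ c > (0:ℝ), ∀ δ ∈ Set.Ioo (0:ℝ) δ₀,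
      ∀ χ : ℝ → ℝ, IsAdmissibleCutoff δ χ →
      ∀ s ∈ Set.Icc (-L) L, ∀ u ∈ Set.Ioo (0:ℝ) δ,
        (s₀ ≤ |s| →
          c ≤ (Complex.exp (Complex.I * ((α - β : ℝ) : ℂ)) *
                (((γ₁ s : ℝ) : ℂ) - (u : ℂ) *
                  Complex.exp (-Complex.I * ((α / 3 * χ u : ℝ) : ℂ)) *
                  ((n₁ s : ℝ) : ℂ))).re) ∧
        (|s| ≤ s₀ →
          c * (u + s ^ 2) ≤ (Complex.exp (Complex.I * ((α - β : ℝ) : ℂ)) *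
                (((γ₁ s : ℝ) : ℂ) - (u : ℂ) *
                  Complex.exp (-Complex.I * ((α / 3 * χ u : ℝ) : ℂ)) *
                  ((n₁ s : ℝ) : ℂ))).re) := by
  obtain ⟨hα0, -⟩ := hα
  obtain ⟨-, hT1, hT2, hT3, hT4⟩ := hT
  set φ := α - β with hφdef
  -- the interval [a, φ] of possible arguments
  set a := φ - α / 3 with hadef
  have haφ : a ≤ φ := by simp [hadef]; linarith
  have ha1 : -(π / 2) < a := by simp only [hadef, hφdef]; linarith
  have hφ2 : φ < π / 2 := hT4
  -- minimum of cos on [a, φ]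
  obtain ⟨x₀, hx₀, hmin⟩ := isCompact_Icc.exists_isMinOn (Set.nonempty_Icc.2 haφ)
    Real.continuousOn_cos
  set m := Real.cos x₀ with hmdef
  have hm : 0 < m := Real.cos_pos_of_mem_Ioo ⟨lt_of_lt_of_le ha1 hx₀.1, lt_of_le_of_lt hx₀.2 hφ2⟩
  -- continuity: choose ε
  have hc2 : Continuous (iteratedDeriv 2 γ₁) := hγ.continuous_iteratedDeriv 2 (by norm_num)
  have he1 : ∀ᶠ t in nhds (0:ℝ), κ₀ / 2 < iteratedDeriv 2 γ₁ t :=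
    (hc2.continuousAt (x := 0)).preimage_mem_nhds (Ioi_mem_nhds (by rw [hγ''0]; linarith))
  have he2 : ∀ᶠ t in nhds (0:ℝ), n₁ t < -(1/2) :=
    (hn.continuous.continuousAt (x := 0)).preimage_mem_nhds (Iio_mem_nhds (by rw [hn0]; norm_num))
  obtain ⟨ε, hε, hball⟩ := Metric.eventually_nhds_iff.1 (he1.and he2)
  set s₀ := min (ε / 2) L with hs₀def
  have hs₀pos : 0 < s₀ := lt_min (by linarith) hL
  have hs₀L : s₀ ≤ L := min_le_right _ _
  have hprop : ∀ t : ℝ, |t| ≤ s₀ → κ₀ / 2 < iteratedDeriv 2 γ₁ t ∧ n₁ t < -(1/2) := by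
    intro t ht
    apply hball
    rw [Real.dist_eq, sub_zero]
    calc |t| ≤ s₀ := ht
      _ ≤ ε / 2 := min_le_left _ _
      _ < ε := by linarith
  -- derivative facts
  have hd1 : Differentiable ℝ γ₁ := hγ.differentiable (by norm_num)
  have hd2 : Differentiable ℝ (deriv γ₁) := by
    have := hγ.differentiable_iteratedDeriv 1 (by norm_num)
    rwa [iteratedDeriv_one] at this
  have hiter : deriv (deriv γ₁) = iteratedDeriv 2 γ₁ := by
    rw [show (2:ℕ) = 1 + 1 from rfl, iteratedDeriv_succ, iteratedDeriv_one]
  have hquad : ∀ s, |s| ≤ s₀ → κ₀ / 4 * s ^ 2 ≤ γ₁ s := by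
    apply quad_lower γ₁ κ₀ s₀ hs₀pos hd1 hd2 hγ0 hγ'0
    intro t ht
    rw [hiter]
    exact (hprop t (abs_le.2 ht)).1
  -- compact minimum away from 0
  obtain ⟨x₁, hx₁, hmin₁⟩ := isCompact_Icc.exists_isMinOn (Set.nonempty_Icc.2 hs₀L)
    hγ.continuous.continuousOn
  obtain ⟨x₂, hx₂, hmin₂⟩ := isCompact_Icc.exists_isMinOn
    (Set.nonempty_Icc.2 (by linarith : -L ≤ -s₀)) hγ.continuous.continuousOn
  set g₀ := min (γ₁ x₁) (γ₁ x₂) with hg₀def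
  have hg₀ : 0 < g₀ := by
    apply lt_min
    · exact hγpos x₁ ⟨by linarith [hx₁.1], hx₁.2⟩ (by intro h; rw [h] at hx₁; linarith [hx₁.1])
    · exact hγpos x₂ ⟨hx₂.1, by linarith [hx₂.2]⟩ (by intro h; rw [h] at hx₂; linarith [hx₂.2])
  have hgb : ∀ s ∈ Set.Icc (-L) L, s₀ ≤ |s| → g₀ ≤ γ₁ s := by
    intro s hs habs
    rcases le_or_gt 0 s with h0 | h0
    · rw [_root_.abs_of_nonneg h0] at habs
      exact le_trans (min_le_left _ _) (hmin₁ ⟨habs, hs.2⟩)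
    · rw [_root_.abs_of_neg h0] at habs
      exact le_trans (min_le_right _ _) (hmin₂ ⟨hs.1, by linarith⟩)
  -- constants
  refine ⟨s₀, hs₀pos, g₀ * m / 2, by positivity,
    min (g₀ * m / 2) (min (κ₀ / 4 * m) (m / 2)), by positivity, ?_⟩
  intro δ hδ χ hχ s hs u hu
  -- bounds on θ
  set θ := α / 3 * χ u with hθdef
  have hχu := hχ.2.2.1 u
  have hθ0 : 0 ≤ θ := mul_nonneg (by linarith) hχu.1
  have hθα : θ ≤ α / 3 := by
    have := hχu.2
    nlinarith
  have hφθ : φ - θ ∈ Set.Icc a φ := ⟨by simp only [hadef]; linarith, by linarith⟩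
  have hcosm : m ≤ Real.cos (φ - θ) := hmin hφθ
  have hcos1 : Real.cos (φ - θ) ≤ 1 := Real.cos_le_one _
  have hcosφ : m ≤ Real.cos φ := hmin ⟨haφ, le_rfl⟩
  rw [re_formula]
  have hu0 : 0 < u := hu.1
  have huδ : u < g₀ * m / 2 := lt_of_lt_of_le hu.2 (le_of_lt hδ.2)
  constructor
  · intro habs
    have h1 : g₀ ≤ γ₁ s := hgb s hs habs
    have h2 : -(u) ≤ -(u * n₁ s * Real.cos (φ - θ)) := by
      have := hn1 s
      have h3 : |u * n₁ s * Real.cos (φ - θ)| ≤ u := by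
        rw [abs_mul, abs_mul, abs_of_pos hu0]
        calc u * |n₁ s| * |Real.cos (φ - θ)| ≤ u * 1 * 1 := by
              apply mul_le_mul (mul_le_mul le_rfl this (abs_nonneg _) hu0.le)
                (Real.abs_cos_le_one _) (abs_nonneg _) (by linarith)
        _ = u := by ring
      linarith [neg_abs_le (u * n₁ s * Real.cos (φ - θ)), le_abs_self (u * n₁ s * Real.cos (φ - θ))]
    have h4 : g₀ * m ≤ γ₁ s * Real.cos φ := by
      apply mul_le_mul h1 hcosφ hm.le (by linarith)
    calc min (g₀ * m / 2) (min (κ₀ / 4 * m) (m / 2)) ≤ g₀ * m / 2 := min_le_left _ _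
      _ ≤ γ₁ s * Real.cos φ - u * n₁ s * Real.cos (φ - θ) := by linarith
  · intro habs
    have h1 : κ₀ / 4 * s ^ 2 ≤ γ₁ s := hquad s habs
    have hn2 : n₁ s < -(1/2) := (hprop s habs).2
    have h2 : u * (1/2) * m ≤ -(u * n₁ s * Real.cos (φ - θ)) := by
      have : u * ((-n₁ s) * Real.cos (φ - θ)) ≥ u * ((1/2) * m) := by
        apply mul_le_mul_of_nonneg_left _ hu0.le
        apply mul_le_mul (by linarith) hcosm hm.le (by linarith)
      linarith
    have h3 : κ₀ / 4 * s ^ 2 * m ≤ γ₁ s * Real.cos φ := by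
      have hs2 : (0:ℝ) ≤ κ₀ / 4 * s ^ 2 := by positivity
      calc κ₀ / 4 * s ^ 2 * m ≤ γ₁ s * m := mul_le_mul_of_nonneg_right h1 hm.le
        _ ≤ γ₁ s * Real.cos φ := mul_le_mul_of_nonneg_left hcosφ (by linarith)
    have hcle : min (g₀ * m / 2) (min (κ₀ / 4 * m) (m / 2)) ≤ min (κ₀ / 4 * m) (m / 2) :=
      min_le_right _ _
    have hc1 : min (g₀ * m / 2) (min (κ₀ / 4 * m) (m / 2)) ≤ κ₀ / 4 * m :=
      le_trans hcle (min_le_left _ _)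
    have hc2 : min (g₀ * m / 2) (min (κ₀ / 4 * m) (m / 2)) ≤ m / 2 :=
      le_trans hcle (min_le_right _ _)
    have hcpos : (0:ℝ) < min (g₀ * m / 2) (min (κ₀ / 4 * m) (m / 2)) := by positivity
    have hs2 : (0:ℝ) ≤ s ^ 2 := sq_nonneg s
    have hA : min (g₀ * m / 2) (min (κ₀ / 4 * m) (m / 2)) * u ≤ u * (1/2) * m := by
      have := mul_le_mul_of_nonneg_right hc2 hu0.le
      linarith
    have hB : min (g₀ * m / 2) (min (κ₀ / 4 * m) (m / 2)) * s ^ 2 ≤ κ₀ / 4 * m * s ^ 2 :=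
      mul_le_mul_of_nonneg_right hc1 hs2
    have hexp : min (g₀ * m / 2) (min (κ₀ / 4 * m) (m / 2)) * (u + s ^ 2)
        = min (g₀ * m / 2) (min (κ₀ / 4 * m) (m / 2)) * u
          + min (g₀ * m / 2) (min (κ₀ / 4 * m) (m / 2)) * s ^ 2 := by ring
    rw [hexp]
    linarith
end
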